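/- Let σ = (Z,P) be a stability condition on a triangulated category D whose central charge Z has discrete image in ℂ (i.e. the image of Z : K(D) → ℂ is a discrete subgroup), and fix 0 < ε < 1/2 and φ ∈ ℝ. Then the quasi-abelian category P((φ−ε,φ+ε)) is of finite length; concretely, there is no infinite sequence of distinguished triangles A_{n+1} → A_n → B_n → A_{n+1}[1] (n ≥ 0) with all A_n and all B_n nonzero objects of P((φ−ε,φ+ε)) (no infinite descending chain of strict subobjects), and there is no infinite sequence of distinguished triangles K_n → A_n → A_{n+1} → K_n[1] (n ≥ 0) with all A_n and all K_n nonzero objects of P((φ−ε,φ+ε)) (no infinite ascending chain of strict quotients). In particular σ is locally finite. -/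

import Mathlib

/-!
Rotate the central charge so that phase `φ` points along the positive real axis and take real
parts: `w(E) = Re (Z(E) e^{-iπφ})`. This is additive on distinguished triangles. A nonzero
semistable object of phase `ψ ∈ (φ - ε, φ + ε)` has `w = |Z| cos (π (ψ - φ)) ≥ δ cos (π ε) > 0`,
where `δ > 0` bounds the nonzero values of `Z` away from `0`; by additivity every object of
`P((φ - ε, φ + ε))` has `w ≥ 0`, and `w ≥ δ cos (π ε)` if it is nonzero. Along a chain of strict
subobjects or strict quotients `w` then drops by at least `δ cos (π ε)` at each step, so the chain
cannot be infinite.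
-/

open CategoryTheory CategoryTheory.Limits CategoryTheory.Pretriangulated
open CategoryTheory.Triangulated

universe v u

variable (C : Type u) [Category.{v} C] [HasZeroObject C] [HasShift C ℤ]
  [Preadditive C] [∀ n : ℤ, (CategoryTheory.shiftFunctor C n).Additive] [Pretriangulated C]

/-- A Harder–Narasimhan decomposition of an object `E` with respect to a collection of
full subcategories `P φ` (`φ : ℝ`). -/
structure HNFiltration (P : ℝ → Set C) (E : C) where
  n : ℕ
  phase : Fin n → ℝ
  phase_strictAnti : StrictAnti phase
  obj : Fin (n + 1) → C
  obj_zero : IsZero (obj 0)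
  obj_last : obj (Fin.last n) = E
  fac : Fin n → C
  fac_mem : ∀ j, fac j ∈ P (phase j)
  fac_nonzero : ∀ j, ¬ IsZero (fac j)
  triangle : ∀ j : Fin n, ∃ (f : obj j.castSucc ⟶ obj j.succ) (g : obj j.succ ⟶ fac j)
      (h : fac j ⟶ (obj j.castSucc)⟦(1 : ℤ)⟧), Triangle.mk f g h ∈ distTriang C

/-- A stability condition `σ = (Z, P)` on a triangulated category `C`. -/
structure StabilityCondition where
  Z : C → ℂ
  P : ℝ → Set C
  additive : ∀ T : Triangle C, (T ∈ distTriang C) → Z T.obj₂ = Z T.obj₁ + Z T.obj₃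
  P_iso : ∀ (φ : ℝ) (A B : C), (A ≅ B) → A ∈ P φ → B ∈ P φ
  P_zero : ∀ (φ : ℝ) (A : C), IsZero A → A ∈ P φ
  central : ∀ (φ : ℝ) (E : C), E ∈ P φ → ¬ IsZero E →
      ∃ m : ℝ, 0 < m ∧ Z E = m * Complex.exp (Real.pi * φ * Complex.I)
  shift : ∀ (φ : ℝ) (E : C), E ∈ P (φ + 1) ↔ E⟦(-1 : ℤ)⟧ ∈ P φ
  hom_zero : ∀ (φ₁ φ₂ : ℝ), φ₂ < φ₁ → ∀ (A B : C), A ∈ P φ₁ → B ∈ P φ₂ →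
      ∀ f : A ⟶ B, f = 0
  HN : ∀ E : C, ¬ IsZero E → Nonempty (HNFiltration C P E)

/-- The extension-closed full subcategory `P(I)` of `C` generated by the subcategories
`P(φ)` for `φ ∈ I`. -/
inductive PCat (P : ℝ → Set C) (I : Set ℝ) : C → Prop
  | of (φ : ℝ) (hφ : φ ∈ I) (E : C) (hE : E ∈ P φ) : PCat P I E
  | zero (E : C) (hE : IsZero E) : PCat P I E
  | iso (E F : C) (e : E ≅ F) (hE : PCat P I E) : PCat P I F
  | ext (A E B : C) (f : A ⟶ E) (g : E ⟶ B) (h : B ⟶ A⟦(1 : ℤ)⟧)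
      (hT : Triangle.mk f g h ∈ distTriang C) (hA : PCat P I A) (hB : PCat P I B) :
      PCat P I E


/-- There is no infinite descending chain of strict subobjects in `P(I)`: no infinite
sequence of distinguished triangles `A_{n+1} → A_n → B_n → A_{n+1}[1]` with all `A_n`
and all `B_n` nonzero objects of `P(I)`. -/
def NoInfiniteDescendingChain (P : ℝ → Set C) (I : Set ℝ) : Prop :=
  ¬ ∃ (A B : ℕ → C) (f : ∀ n : ℕ, A (n + 1) ⟶ A n) (g : ∀ n : ℕ, A n ⟶ B n)
      (h : ∀ n : ℕ, B n ⟶ (A (n + 1))⟦(1 : ℤ)⟧),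
    (∀ n : ℕ, Triangle.mk (f n) (g n) (h n) ∈ distTriang C) ∧
    (∀ n : ℕ, PCat C P I (A n)) ∧ (∀ n : ℕ, PCat C P I (B n)) ∧
    (∀ n : ℕ, ¬ IsZero (A n)) ∧ (∀ n : ℕ, ¬ IsZero (B n))

/-- There is no infinite ascending chain of strict quotients in `P(I)`: no infinite
sequence of distinguished triangles `K_n → A_n → A_{n+1} → K_n[1]` with all `A_n`
and all `K_n` nonzero objects of `P(I)`. -/
def NoInfiniteAscendingChain (P : ℝ → Set C) (I : Set ℝ) : Prop :=
  ¬ ∃ (A K : ℕ → C) (f : ∀ n : ℕ, K n ⟶ A n) (g : ∀ n : ℕ, A n ⟶ A (n + 1))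
      (h : ∀ n : ℕ, A (n + 1) ⟶ (K n)⟦(1 : ℤ)⟧),
    (∀ n : ℕ, Triangle.mk (f n) (g n) (h n) ∈ distTriang C) ∧
    (∀ n : ℕ, PCat C P I (A n)) ∧ (∀ n : ℕ, PCat C P I (K n)) ∧
    (∀ n : ℕ, ¬ IsZero (A n)) ∧ (∀ n : ℕ, ¬ IsZero (K n))

/-- A stability condition is locally finite if for some `ε > 0` each quasi-abelian
category `P((φ-ε, φ+ε))` is of finite length. -/
def StabilityCondition.LocallyFinite (σ : StabilityCondition C) : Prop :=
  ∃ ε : ℝ, 0 < ε ∧ ∀ φ : ℝ,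
    NoInfiniteDescendingChain C σ.P (Set.Ioo (φ - ε) (φ + ε)) ∧
    NoInfiniteAscendingChain C σ.P (Set.Ioo (φ - ε) (φ + ε))

variable {C}

def IsAdditiveOnTriangles {M : Type*} [Add M] (w : C → M) : Prop :=
  ∀ T ∈ distTriang C, w T.obj₂ = w T.obj₁ + w T.obj₃

lemma IsAdditiveOnTriangles.apply_mk {M : Type*} [Add M] {w : C → M}
    (hw : IsAdditiveOnTriangles w) {X Y Z : C} {f : X ⟶ Y} {g : Y ⟶ Z}
    {h : Z ⟶ X⟦(1 : ℤ)⟧} (hT : Triangle.mk f g h ∈ distTriang C) : w Y = w X + w Z :=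
  hw _ hT

lemma IsAdditiveOnTriangles.comp {M N : Type*} [AddZeroClass M] [AddZeroClass N] {w : C → M}
    (hw : IsAdditiveOnTriangles w) (f : M →+ N) : IsAdditiveOnTriangles (f ∘ w) :=
  fun T hT => by simp only [Function.comp_apply, hw T hT, map_add]

namespace IsAdditiveOnTriangles

variable {M : Type*} [AddMonoid M] [IsLeftCancelAdd M] {w : C → M}

lemma map_isZero (hw : IsAdditiveOnTriangles w) {E : C} (hE : IsZero E) : w E = 0 := by
  have hT : Triangle.mk (𝟙 E) (0 : E ⟶ E) 0 ∈ distTriang C :=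
    (Triangle.distinguished_iff_of_isZero₃ _ hE).2 (inferInstanceAs (IsIso (𝟙 E)))
  exact left_eq_add.1 (hw _ hT)

open ZeroObject in
lemma map_iso (hw : IsAdditiveOnTriangles w) {A B : C} (e : A ≅ B) : w A = w B := by
  have hT : Triangle.mk e.hom (0 : B ⟶ 0) 0 ∈ distTriang C :=
    (Triangle.distinguished_iff_of_isZero₃ _ (isZero_zero C)).2 (inferInstanceAs (IsIso e.hom))
  rw [hw.apply_mk hT]
  exact (add_eq_left.2 (hw.map_isZero (isZero_zero C))).symm

end IsAdditiveOnTriangles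

lemma PCat.nonneg_and_le {P : ℝ → Set C} {I : Set ℝ} {w : C → ℝ}
    (hw : IsAdditiveOnTriangles w) {c : ℝ} (hc : 0 ≤ c)
    (hP : ∀ ψ ∈ I, ∀ E ∈ P ψ, ¬ IsZero E → c ≤ w E) {E : C} (hE : PCat C P I E) :
    0 ≤ w E ∧ (¬ IsZero E → c ≤ w E) := by
  induction hE with
  | of ψ hψ E hEψ =>
    by_cases hzero : IsZero E
    · exact ⟨(hw.map_isZero hzero).ge, absurd hzero⟩
    · have hcw := hP ψ hψ E hEψ hzero
      exact ⟨hc.trans hcw, fun _ => hcw⟩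
  | zero E hzero => exact ⟨(hw.map_isZero hzero).ge, absurd hzero⟩
  | iso E F e _ ih =>
    rw [← hw.map_iso e]
    exact ⟨ih.1, fun hF => ih.2 fun hzero => hF (hzero.of_iso e.symm)⟩
  | ext A E B f g h hT _ _ ihA ihB =>
    rw [hw.apply_mk hT]
    refine ⟨add_nonneg ihA.1 ihB.1, fun hE => ?_⟩
    by_cases hA : IsZero A
    · have hB : ¬ IsZero B := fun hB => hE (Triangle.isZero₂_of_isZero₁₃ _ hT hA hB)
      linarith [ihA.1, ihB.2 hB]
    · linarith [ihA.2 hA, ihB.1]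

lemma exists_lt_zero_of_add_le {a : ℕ → ℝ} {c : ℝ} (hc : 0 < c)
    (h : ∀ n, a (n + 1) + c ≤ a n) : ∃ n, a n < 0 := by
  have hle : ∀ n : ℕ, a n + n * c ≤ a 0 := by
    intro n
    induction n with
    | zero => simp
    | succ n ih => push_cast; linarith [h n]
  obtain ⟨n, hn⟩ := exists_nat_gt (a 0 / c)
  exact ⟨n, by linarith [hle n, (div_lt_iff₀ hc).1 hn]⟩

section FiniteLength

variable {P : ℝ → Set C} {I : Set ℝ} {w : C → ℝ} {c : ℝ}

lemma noInfiniteDescendingChain_of_additive (hw : IsAdditiveOnTriangles w) (hc : 0 < c)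
    (hbound : ∀ E, PCat C P I E → 0 ≤ w E ∧ (¬ IsZero E → c ≤ w E)) :
    NoInfiniteDescendingChain C P I := by
  rintro ⟨A, B, f, g, h, hT, hA, hB, -, hBne⟩
  have hstep : ∀ n, w (A (n + 1)) + c ≤ w (A n) := fun n => by
    rw [hw.apply_mk (hT n)]
    linarith [(hbound _ (hB n)).2 (hBne n)]
  obtain ⟨n, hn⟩ := exists_lt_zero_of_add_le (a := fun n => w (A n)) hc hstep
  exact hn.not_ge (hbound _ (hA n)).1

lemma noInfiniteAscendingChain_of_additive (hw : IsAdditiveOnTriangles w) (hc : 0 < c)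
    (hbound : ∀ E, PCat C P I E → 0 ≤ w E ∧ (¬ IsZero E → c ≤ w E)) :
    NoInfiniteAscendingChain C P I := by
  rintro ⟨A, K, f, g, h, hT, hA, hK, -, hKne⟩
  have hstep : ∀ n, w (A (n + 1)) + c ≤ w (A n) := fun n => by
    rw [hw.apply_mk (hT n)]
    linarith [(hbound _ (hK n)).2 (hKne n)]
  obtain ⟨n, hn⟩ := exists_lt_zero_of_add_le (a := fun n => w (A n)) hc hstep
  exact hn.not_ge (hbound _ (hA n)).1

end FiniteLength

namespace StabilityCondition

variable (σ : StabilityCondition C)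

lemma re_Z_mul_exp_of_mem_P {ψ : ℝ} {E : C} (hE : E ∈ σ.P ψ) (hne : ¬ IsZero E) (φ : ℝ) :
    σ.Z E ≠ 0 ∧ (σ.Z E * Complex.exp (-(Real.pi * φ * Complex.I))).re =
      ‖σ.Z E‖ * Real.cos (Real.pi * (ψ - φ)) := by
  obtain ⟨m, hm, hZ⟩ := σ.central ψ E hE hne
  have hexp : ∀ x : ℝ, Complex.exp (Real.pi * x * Complex.I) =
      Complex.exp ((Real.pi * x : ℝ) * Complex.I) := fun x => by push_cast; rfl
  refine ⟨by rw [hZ]; exact mul_ne_zero (by exact_mod_cast hm.ne') (Complex.exp_ne_zero _), ?_⟩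
  rw [hZ, norm_mul, hexp, Complex.norm_exp_ofReal_mul_I, mul_one, Complex.norm_real,
    Real.norm_of_nonneg hm.le, mul_assoc, ← Complex.exp_add]
  have : ((Real.pi * ψ : ℝ) : ℂ) * Complex.I + -(Real.pi * φ * Complex.I) =
      ((Real.pi * (ψ - φ) : ℝ) : ℂ) * Complex.I := by push_cast; ring
  rw [this, Complex.re_ofReal_mul, Complex.exp_ofReal_mul_I_re]

lemma le_re_Z_mul_exp_of_mem_P {δ : ℝ} (hdisc : ∀ E : C, σ.Z E ≠ 0 → δ ≤ ‖σ.Z E‖)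
    {φ ψ ε : ℝ} (hψ : |ψ - φ| ≤ ε) (hε : ε ≤ 1 / 2) {E : C} (hE : E ∈ σ.P ψ)
    (hne : ¬ IsZero E) :
    δ * Real.cos (Real.pi * ε) ≤ (σ.Z E * Complex.exp (-(Real.pi * φ * Complex.I))).re := by
  obtain ⟨hZ, hre⟩ := σ.re_Z_mul_exp_of_mem_P hE hne φ
  have hπ := Real.pi_pos
  have hcos_nonneg : 0 ≤ Real.cos (Real.pi * ε) :=
    Real.cos_nonneg_of_mem_Icc ⟨by nlinarith [abs_nonneg (ψ - φ)], by nlinarith⟩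
  have hcos_le : Real.cos (Real.pi * ε) ≤ Real.cos (Real.pi * (ψ - φ)) := by
    rw [← Real.cos_abs (Real.pi * (ψ - φ)), abs_mul, abs_of_pos hπ]
    exact Real.cos_le_cos_of_nonneg_of_le_pi (by positivity) (by nlinarith)
      (mul_le_mul_of_nonneg_left hψ hπ.le)
  rw [hre]
  calc δ * Real.cos (Real.pi * ε) ≤ ‖σ.Z E‖ * Real.cos (Real.pi * ε) :=
        mul_le_mul_of_nonneg_right (hdisc E hZ) hcos_nonneg
    _ ≤ ‖σ.Z E‖ * Real.cos (Real.pi * (ψ - φ)) :=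
        mul_le_mul_of_nonneg_left hcos_le (norm_nonneg _)

theorem finiteLength_of_norm_Z_ge {δ : ℝ} (hδ : 0 < δ)
    (hdisc : ∀ E : C, σ.Z E ≠ 0 → δ ≤ ‖σ.Z E‖) {ε : ℝ} (hε0 : 0 ≤ ε) (hε : ε < 1 / 2)
    (φ : ℝ) :
    NoInfiniteDescendingChain C σ.P (Set.Ioo (φ - ε) (φ + ε)) ∧
    NoInfiniteAscendingChain C σ.P (Set.Ioo (φ - ε) (φ + ε)) := by
  have hw : IsAdditiveOnTriangles fun E => (σ.Z E * Complex.exp (-(Real.pi * φ * Complex.I))).re :=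
    IsAdditiveOnTriangles.comp (w := σ.Z) σ.additive
      (Complex.reAddGroupHom.comp (AddMonoidHom.mulRight (Complex.exp (-(Real.pi * φ * Complex.I)))))
  have hc : 0 < δ * Real.cos (Real.pi * ε) :=
    mul_pos hδ (Real.cos_pos_of_mem_Ioo ⟨by nlinarith [Real.pi_pos], by nlinarith [Real.pi_pos]⟩)
  have hP : ∀ ψ ∈ Set.Ioo (φ - ε) (φ + ε), ∀ E ∈ σ.P ψ, ¬ IsZero E →
      δ * Real.cos (Real.pi * ε) ≤ (σ.Z E * Complex.exp (-(Real.pi * φ * Complex.I))).re :=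
    fun ψ hψ E hE hne => σ.le_re_Z_mul_exp_of_mem_P hdisc
      (abs_sub_lt_iff.2 ⟨by linarith [hψ.2], by linarith [hψ.1]⟩).le hε.le hE hne
  have hbound := fun E => PCat.nonneg_and_le (E := E) hw hc.le hP
  exact ⟨noInfiniteDescendingChain_of_additive hw hc hbound,
    noInfiniteAscendingChain_of_additive hw hc hbound⟩

end StabilityCondition

theorem discrete_stabilityCondition_locally_finite (σ : StabilityCondition C)
    (hdisc : ∃ δ : ℝ, 0 < δ ∧ ∀ z ∈ AddSubgroup.closure (Set.range σ.Z),
      z ≠ 0 → δ ≤ ‖z‖)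
    (ε : ℝ) (hε0 : 0 < ε) (hε : ε < 1 / 2) (φ : ℝ) :
    NoInfiniteDescendingChain C σ.P (Set.Ioo (φ - ε) (φ + ε)) ∧
    NoInfiniteAscendingChain C σ.P (Set.Ioo (φ - ε) (φ + ε)) ∧
    σ.LocallyFinite C := by
  obtain ⟨δ, hδ, hdisc⟩ := hdisc
  have hZ : ∀ E : C, σ.Z E ≠ 0 → δ ≤ ‖σ.Z E‖ :=
    fun E => hdisc _ (AddSubgroup.subset_closure ⟨E, rfl⟩)
  have hfin := σ.finiteLength_of_norm_Z_ge hδ hZ hε0.le hε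
  exact ⟨(hfin φ).1, (hfin φ).2, ε, hε0, hfin⟩
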